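/- Let 𝔸 be an algebra and θ_0, θ_1 congruences. The following are equivalent: (1) ⟨x,y⟩ ∈ [θ_0,θ_1]_H; (2) the square with vertices (x,x;x,y) (three corners x, pivot corner y) belongs to Δ(θ_0,θ_1); (3) some square (a,a;x,y) belongs to Δ(θ_0,θ_1) for some a ∈ A; (4) some square (b,x;b,y) belongs to Δ(θ_0,θ_1) for some b ∈ A. -/
import Mathlib


universe u v

structure Signature : Type 1 where
  ops : Type
  arity : ops → ℕ

class Alg (σ : Signature) (A : Type u) : Type u where
  interp : ∀ o : σ.ops, (Fin (σ.arity o) → A) → A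

/-- A labeled `S`-dimensional cube with vertices labeled by elements of `A`. -/
abbrev Cube (S : Type v) (A : Type u) : Type (max u v) := (S → Bool) → A

section Defs

variable {A : Type u} {B : Type u} {S : Type v}

def Quasireflexive (R : Set (B × B)) : Prop :=
  ∀ a b : B, (a, b) ∈ R → (a, a) ∈ R ∧ (b, b) ∈ R

def SymmRel (R : Set (B × B)) : Prop := ∀ a b : B, (a, b) ∈ R → (b, a) ∈ R

def TransRel (R : Set (B × B)) : Prop :=
  ∀ a b c : B, (a, b) ∈ R → (b, c) ∈ R → (a, c) ∈ R

def face [DecidableEq S] (i : S) (b : Bool) (γ : Cube S A) : Cube {x : S // x ≠ i} A :=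
  fun f => γ fun j => if h : j = i then b else f ⟨j, h⟩

def facesRel [DecidableEq S] (i : S) (R : Set (Cube S A)) :
    Set (Cube {x : S // x ≠ i} A × Cube {x : S // x ≠ i} A) :=
  {p | ∃ γ ∈ R, p = (face i false γ, face i true γ)}

def SRefl [DecidableEq S] (R : Set (Cube S A)) : Prop := ∀ i : S, Quasireflexive (facesRel i R)
def SSymm [DecidableEq S] (R : Set (Cube S A)) : Prop := ∀ i : S, SymmRel (facesRel i R)
def STrans [DecidableEq S] (R : Set (Cube S A)) : Prop := ∀ i : S, TransRel (facesRel i R)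

def glue (i : S) (a b : Cube {x : S // x ≠ i} A) : Cube S A :=
  fun f => if f i then b (fun j => f j.val) else a (fun j => f j.val)

def reflMap [DecidableEq S] (i : S) (b : Bool) (γ : Cube S A) : Cube S A :=
  glue i (face i b γ) (face i b γ)

def symMap [DecidableEq S] (i : S) (γ : Cube S A) : Cube S A :=
  glue i (face i true γ) (face i false γ)

def cut (Q : Set S) [DecidablePred (· ∈ Q)] (γ : Cube S A) :
    Cube {x : S // x ∈ Q} (Cube {x : S // x ∉ Q} A) :=
  fun f g => γ fun j => if h : j ∈ Q then f ⟨j, h⟩ else g ⟨j, h⟩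

def cutProj (Q : Set S) [DecidablePred (· ∈ Q)] (R : Set (Cube S A))
    (f : {x : S // x ∈ Q} → Bool) : Set (Cube {x : S // x ∉ Q} A) :=
  (fun γ => cut Q γ f) '' R

variable (σ : Signature)

def CompatCube [Alg σ A] (R : Set (Cube S A)) : Prop :=
  ∀ (o : σ.ops) (γ : Fin (σ.arity o) → Cube S A), (∀ k, γ k ∈ R) →
    (fun f => Alg.interp (A := A) o fun k => γ k f) ∈ R

def CompatRel [Alg σ A] (θ : Set (A × A)) : Prop :=
  ∀ (o : σ.ops) (x y : Fin (σ.arity o) → A), (∀ k, (x k, y k) ∈ θ) →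
    (Alg.interp (A := A) o x, Alg.interp (A := A) o y) ∈ θ

def IsCongruence [Alg σ A] (θ : Set (A × A)) : Prop :=
  (∀ a : A, (a, a) ∈ θ) ∧ SymmRel θ ∧ TransRel θ ∧ CompatRel σ θ

def IsTolerance [Alg σ A] [DecidableEq S] (R : Set (Cube S A)) : Prop :=
  CompatCube σ R ∧ SRefl R ∧ SSymm R

def IsHCongruence [Alg σ A] [DecidableEq S] (R : Set (Cube S A)) : Prop :=
  IsTolerance σ R ∧ STrans R

def subalgGen [Alg σ A] (X : Set (Cube S A)) : Set (Cube S A) :=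
  ⋂₀ {R : Set (Cube S A) | CompatCube σ R ∧ X ⊆ R}

def tolGen [Alg σ A] [DecidableEq S] (X : Set (Cube S A)) : Set (Cube S A) :=
  ⋂₀ {R : Set (Cube S A) | IsTolerance σ R ∧ X ⊆ R}

def congGen [Alg σ A] [DecidableEq S] (X : Set (Cube S A)) : Set (Cube S A) :=
  ⋂₀ {R : Set (Cube S A) | IsHCongruence σ R ∧ X ⊆ R}

def cubeAt (i : S) (p : A × A) : Cube S A := fun f => bif f i then p.2 else p.1

def cubeSet (i : S) (θ : Set (A × A)) : Set (Cube S A) := cubeAt i '' θ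

def MRel [Alg σ A] [DecidableEq S] (θ : S → Set (A × A)) : Set (Cube S A) :=
  tolGen σ (⋃ i : S, cubeSet i (θ i))

def DeltaRel [Alg σ A] [DecidableEq S] (θ : S → Set (A × A)) : Set (Cube S A) :=
  congGen σ (⋃ i : S, cubeSet i (θ i))

def rectRel [DecidableEq S] (θ : S → Set (A × A)) : Set (Cube S A) :=
  {γ | ∀ (i : S) (f : {x : S // x ≠ i} → Bool), (face i false γ f, face i true γ f) ∈ θ i}

def dirClosure [DecidableEq S] (i : S) (R : Set (Cube S A)) : Set (Cube S A) :=
  {γ | Relation.TransGen (fun a b : Cube {x : S // x ≠ i} A => (a, b) ∈ facesRel i R)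
      (face i false γ) (face i true γ)}

def Centrality [DecidableEq S] [Fintype S] (δ : Set (A × A)) (i : S)
    (R : Set (Cube S A)) : Prop :=
  ¬ ∃ γ ∈ R, Nat.card {f : {x : S // x ≠ i} → Bool //
      (face i false γ f, face i true γ f) ∈ δ} = 2 ^ (Fintype.card S - 1) - 1

end Defs

def finMod (n : ℕ) [NeZero n] (j : ℕ) : Fin n :=
  ⟨j % n, Nat.mod_lt _ (Nat.pos_of_ne_zero (NeZero.ne n))⟩

def tcSeq {A : Type u} {n : ℕ} [NeZero n] (Y : Set (Cube (Fin n) A)) :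
    ℕ → Set (Cube (Fin n) A)
  | 0 => dirClosure (finMod n 0) Y
  | j + 1 => dirClosure (finMod n (j + 1)) (tcSeq Y j)

def tcClosure {A : Type u} {n : ℕ} [NeZero n] (Y : Set (Cube (Fin n) A)) :
    Set (Cube (Fin n) A) := ⋃ j : ℕ, tcSeq Y j

def lastIdx (n : ℕ) [NeZero n] : Fin n :=
  ⟨n - 1, Nat.sub_lt (Nat.pos_of_ne_zero (NeZero.ne n)) Nat.one_pos⟩

def tcComm (σ : Signature) {A : Type u} [Alg σ A] (n : ℕ) [NeZero n]
    (θ : Fin n → Set (A × A)) : Set (A × A) :=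
  ⋂₀ {δ : Set (A × A) | IsCongruence σ δ ∧ Centrality δ (lastIdx n) (MRel σ θ)}

def hComm (σ : Signature) {A : Type u} [Alg σ A] (n : ℕ) [NeZero n]
    (θ : Fin n → Set (A × A)) : Set (A × A) :=
  ⋂₀ {δ : Set (A × A) | IsCongruence σ δ ∧ Centrality δ (lastIdx n) (DeltaRel σ θ)}

inductive Term (σ : Signature) (k : ℕ) : Type
  | var : Fin k → Term σ k
  | app : (o : σ.ops) → (Fin (σ.arity o) → Term σ k) → Term σ k

def Term.eval {σ : Signature} {k : ℕ} {A : Type u} [Alg σ A] :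
    Term σ k → (Fin k → A) → A
  | .var i, v => v i
  | .app o ts, v => Alg.interp (A := A) o fun j => (ts j).eval v

def IsTaylorAlg (σ : Signature) (A : Type u) [Alg σ A] : Prop :=
  ∃ (m : ℕ) (t : Term σ (m + 1)),
    (∀ a : A, t.eval (fun _ => a) = a) ∧
    ∀ e : Fin (m + 1), ∃ u v : Fin (m + 1) → Bool, u e = false ∧ v e = true ∧
      ∀ x y : A, t.eval (fun i => bif u i then y else x)
               = t.eval (fun i => bif v i then y else x)

open Classical in
noncomputable def comCube {A : Type u} (n : ℕ) (x y : A) : Cube (Fin n) A :=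
  fun f => if ∀ i, f i = true then y else x

def iSupported {A : Type u} {S : Type v} [DecidableEq S] (i : S) (γ : Cube S A)
    (x y : A) : Prop :=
  face i false γ (fun _ => true) = x ∧ face i true γ (fun _ => true) = y ∧
  ∀ f : {z : S // z ≠ i} → Bool, f ≠ (fun _ => true) →
    face i false γ f = face i true γ f

def sqCube {A : Type u} (a b c d : A) : Cube (Fin 2) A :=
  fun f => if f 0 then (if f 1 then d else c) else (if f 1 then b else a)

def lcs (σ : Signature) {A : Type u} [Alg σ A] (θ : Set (A × A)) : ℕ → Set (A × A)
  | 0 => θ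
  | n + 1 => tcComm σ 2 ![θ, lcs σ θ n]

def diagRel (A : Type u) : Set (A × A) := {p : A × A | p.1 = p.2}
section Basics

variable {A : Type u} {S : Type v} [DecidableEq S]

lemma face_glue (i : S) (b : Bool) (a₀ a₁ : Cube {x : S // x ≠ i} A) :
    face i b (glue i a₀ a₁) = (bif b then a₁ else a₀) := by
  funext f
  have h2 : (fun j : {x : S // x ≠ i} => if h : (j : S) = i then b else f ⟨(j : S), h⟩) = f := by
    funext j; rw [dif_neg j.prop]
  cases b <;> simp [face, glue] <;> (congr 1; funext j; simp [j.prop])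

lemma glue_face (i : S) (γ : Cube S A) :
    glue i (face i false γ) (face i true γ) = γ := by
  funext f
  cases hf : f i <;> simp [glue, face, hf] <;>
  · congr 1
    funext j
    by_cases h : j = i
    · subst h; simp [hf]
    · simp [h]

lemma mem_facesRel {R : Set (Cube S A)} {i : S} {a b : Cube {x : S // x ≠ i} A} :
    (a, b) ∈ facesRel i R ↔ glue i a b ∈ R := by
  constructor
  · rintro ⟨γ, hγ, heq⟩
    have ha : a = face i false γ := congrArg Prod.fst heq
    have hb : b = face i true γ := congrArg Prod.snd heq
    rw [ha, hb, glue_face]; exact hγ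
  · intro h
    exact ⟨glue i a b, h, by rw [face_glue, face_glue]; rfl⟩

end Basics
section Fin2

variable {A : Type u}

lemma fin2_cases (i : Fin 2) : i = 0 ∨ i = 1 := by
  fin_cases i <;> simp

def el (i : Fin 2) : {x : Fin 2 // x ≠ i} :=
  ⟨if i = 0 then 1 else 0, by fin_cases i <;> simp⟩

lemma subt_eq {i : Fin 2} (j : {x : Fin 2 // x ≠ i}) : j = el i := by
  have hp := j.prop
  apply Subtype.ext
  rcases fin2_cases i with rfl | rfl <;> rcases fin2_cases j.val with h | h <;>
    simp_all [el]

lemma fun_eta {i : Fin 2} (f : {x : Fin 2 // x ≠ i} → Bool) : f = fun _ => f (el i) :=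
  funext fun j => by rw [subt_eq j]

def ln (i : Fin 2) (p q : A) : Cube {x : Fin 2 // x ≠ i} A :=
  fun f => bif f (el i) then q else p

lemma ln_eta (i : Fin 2) (a : Cube {x : Fin 2 // x ≠ i} A) :
    a = ln i (a fun _ => false) (a fun _ => true) := by
  funext f
  conv_lhs => rw [fun_eta f]
  cases h : f (el i) <;> simp [ln, h]

lemma ln_surj (i : Fin 2) (a : Cube {x : Fin 2 // x ≠ i} A) :
    ∃ p q, a = ln i p q := ⟨_, _, ln_eta i a⟩

lemma glue1 (a b c d : A) : glue 1 (ln 1 a c) (ln 1 b d) = sqCube a b c d := by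
  funext f
  simp only [glue, ln, sqCube, el]
  norm_num
  cases h0 : f 0 <;> cases h1 : f 1 <;> simp [h0, h1]

lemma glue0 (a b c d : A) : glue 0 (ln 0 a b) (ln 0 c d) = sqCube a b c d := by
  funext f
  simp only [glue, ln, sqCube, el]
  norm_num
  cases h0 : f 0 <;> cases h1 : f 1 <;> simp [h0, h1]

lemma mem_fr0 {R : Set (Cube (Fin 2) A)} {a b c d : A} :
    (ln 0 a b, ln 0 c d) ∈ facesRel 0 R ↔ sqCube a b c d ∈ R := by
  rw [mem_facesRel, glue0]

lemma mem_fr1 {R : Set (Cube (Fin 2) A)} {a b c d : A} :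
    (ln 1 a c, ln 1 b d) ∈ facesRel 1 R ↔ sqCube a b c d ∈ R := by
  rw [mem_facesRel, glue1]

lemma face0f (a b c d : A) : face 0 false (sqCube a b c d) = ln 0 a b := by
  rw [← glue0 a b c d, face_glue]; rfl

lemma face0t (a b c d : A) : face 0 true (sqCube a b c d) = ln 0 c d := by
  rw [← glue0 a b c d, face_glue]; rfl

lemma face1f (a b c d : A) : face 1 false (sqCube a b c d) = ln 1 a c := by
  rw [← glue1 a b c d, face_glue]; rfl

lemma face1t (a b c d : A) : face 1 true (sqCube a b c d) = ln 1 b d := by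
  rw [← glue1 a b c d, face_glue]; rfl

def vf (b0 b1 : Bool) : Fin 2 → Bool := fun j => if j = 0 then b0 else b1

lemma sq_surj (γ : Cube (Fin 2) A) :
    ∃ a b c d, γ = sqCube a b c d := by
  refine ⟨γ (vf false false), γ (vf false true), γ (vf true false), γ (vf true true), ?_⟩
  funext f
  have hf : f = vf (f 0) (f 1) := by
    funext j
    rcases fin2_cases j with rfl | rfl <;> simp [vf]
  rw [hf]
  cases h0 : f 0 <;> cases h1 : f 1 <;> simp [sqCube, vf]

lemma cubeAt0 (u v : A) : cubeAt 0 (u, v) = sqCube u u v v := by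
  funext f
  cases h0 : f 0 <;> cases h1 : f 1 <;> simp [cubeAt, sqCube, h0, h1]

lemma cubeAt1 (u v : A) : cubeAt 1 (u, v) = sqCube u v u v := by
  funext f
  cases h0 : f 0 <;> cases h1 : f 1 <;> simp [cubeAt, sqCube, h0, h1]

end Fin2
section HCong

variable {A : Type u} {σ : Signature} [Alg σ A]

section ofHCong
variable {R : Set (Cube (Fin 2) A)} (hR : IsHCongruence σ R)
include hR

lemma hsym0 {a b c d : A} (h : sqCube a b c d ∈ R) : sqCube c d a b ∈ R :=
  mem_fr0.mp (hR.1.2.2 0 _ _ (mem_fr0.mpr h))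

lemma hsym1 {a b c d : A} (h : sqCube a b c d ∈ R) : sqCube b a d c ∈ R :=
  mem_fr1.mp (hR.1.2.2 1 _ _ (mem_fr1.mpr h))

lemma hrefl0 {a b c d : A} (h : sqCube a b c d ∈ R) :
    sqCube a b a b ∈ R ∧ sqCube c d c d ∈ R :=
  ⟨mem_fr0.mp (hR.1.2.1 0 _ _ (mem_fr0.mpr h)).1,
   mem_fr0.mp (hR.1.2.1 0 _ _ (mem_fr0.mpr h)).2⟩

lemma hrefl1 {a b c d : A} (h : sqCube a b c d ∈ R) :
    sqCube a a c c ∈ R ∧ sqCube b b d d ∈ R :=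
  ⟨mem_fr1.mp (hR.1.2.1 1 _ _ (mem_fr1.mpr h)).1,
   mem_fr1.mp (hR.1.2.1 1 _ _ (mem_fr1.mpr h)).2⟩

lemma htrans0 {a b c d e g : A} (h1 : sqCube a b c d ∈ R) (h2 : sqCube c d e g ∈ R) :
    sqCube a b e g ∈ R :=
  mem_fr0.mp (hR.2 0 _ _ _ (mem_fr0.mpr h1) (mem_fr0.mpr h2))

lemma htrans1 {a b c d e g : A} (h1 : sqCube a b c d ∈ R) (h2 : sqCube b e d g ∈ R) :
    sqCube a e c g ∈ R :=
  mem_fr1.mp (hR.2 1 _ _ _ (mem_fr1.mpr h1) (mem_fr1.mpr h2))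

end ofHCong

section Gen
variable (σ) (X : Set (Cube (Fin 2) A))

lemma subset_congGen : X ⊆ congGen σ X := fun γ hγ =>
  Set.mem_sInter.mpr fun _ hR => hR.2 hγ

lemma congGen_compat : CompatCube σ (congGen σ X) := by
  intro o γ hγ
  refine Set.mem_sInter.mpr fun R hR => ?_
  exact hR.1.1.1 o γ fun k => Set.mem_sInter.mp (hγ k) R hR

variable {σ X}

lemma csym0 {a b c d : A} (h : sqCube a b c d ∈ congGen σ X) :
    sqCube c d a b ∈ congGen σ X :=
  Set.mem_sInter.mpr fun R hR => hsym0 hR.1 (Set.mem_sInter.mp h R hR)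

lemma csym1 {a b c d : A} (h : sqCube a b c d ∈ congGen σ X) :
    sqCube b a d c ∈ congGen σ X :=
  Set.mem_sInter.mpr fun R hR => hsym1 hR.1 (Set.mem_sInter.mp h R hR)

lemma crefl0 {a b c d : A} (h : sqCube a b c d ∈ congGen σ X) :
    sqCube a b a b ∈ congGen σ X ∧ sqCube c d c d ∈ congGen σ X :=
  ⟨Set.mem_sInter.mpr fun R hR => (hrefl0 hR.1 (Set.mem_sInter.mp h R hR)).1,
   Set.mem_sInter.mpr fun R hR => (hrefl0 hR.1 (Set.mem_sInter.mp h R hR)).2⟩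

lemma crefl1 {a b c d : A} (h : sqCube a b c d ∈ congGen σ X) :
    sqCube a a c c ∈ congGen σ X ∧ sqCube b b d d ∈ congGen σ X :=
  ⟨Set.mem_sInter.mpr fun R hR => (hrefl1 hR.1 (Set.mem_sInter.mp h R hR)).1,
   Set.mem_sInter.mpr fun R hR => (hrefl1 hR.1 (Set.mem_sInter.mp h R hR)).2⟩

lemma ctrans0 {a b c d e g : A} (h1 : sqCube a b c d ∈ congGen σ X)
    (h2 : sqCube c d e g ∈ congGen σ X) : sqCube a b e g ∈ congGen σ X :=
  Set.mem_sInter.mpr fun R hR =>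
    htrans0 hR.1 (Set.mem_sInter.mp h1 R hR) (Set.mem_sInter.mp h2 R hR)

lemma ctrans1 {a b c d e g : A} (h1 : sqCube a b c d ∈ congGen σ X)
    (h2 : sqCube b e d g ∈ congGen σ X) : sqCube a e c g ∈ congGen σ X :=
  Set.mem_sInter.mpr fun R hR =>
    htrans1 hR.1 (Set.mem_sInter.mp h1 R hR) (Set.mem_sInter.mp h2 R hR)

end Gen

end HCong
section Rect

variable {A : Type u} {σ : Signature} [Alg σ A]
variable {θ0 θ1 : Set (A × A)}

lemma rect_sq {a b c d : A} :
    sqCube a b c d ∈ rectRel ![θ0, θ1] ↔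
      (a, c) ∈ θ0 ∧ (b, d) ∈ θ0 ∧ (a, b) ∈ θ1 ∧ (c, d) ∈ θ1 := by
  constructor
  · intro h
    have h0f := h 0 (fun _ => false)
    have h0t := h 0 (fun _ => true)
    have h1f := h 1 (fun _ => false)
    have h1t := h 1 (fun _ => true)
    rw [face0f, face0t] at h0f h0t
    rw [face1f, face1t] at h1f h1t
    simp [ln] at h0f h0t h1f h1t
    exact ⟨h0f, h0t, h1f, h1t⟩
  · rintro ⟨hac, hbd, hab, hcd⟩ i f
    rcases fin2_cases i with rfl | rfl
    · rw [face0f, face0t]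
      cases h : f (el 0) <;> simp [ln, h] <;> assumption
    · rw [face1f, face1t]
      cases h : f (el 1) <;> simp [ln, h] <;> assumption

variable (σ) (h0 : IsCongruence σ θ0) (h1 : IsCongruence σ θ1)
include h0 h1

lemma rect_isHCong : IsHCongruence σ (rectRel ![θ0, θ1]) := by
  refine ⟨⟨?_, ?_, ?_⟩, ?_⟩
  · -- CompatCube
    intro o γ hγ i f
    have key : ∀ b : Bool, face i b (fun f => Alg.interp (A := A) o fun k => γ k f) f
        = Alg.interp (A := A) o fun k => face i b (γ k) f := fun _ => rfl
    rw [key, key]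
    rcases fin2_cases i with rfl | rfl
    · exact h0.2.2.2 o _ _ fun k => hγ k 0 f
    · exact h1.2.2.2 o _ _ fun k => hγ k 1 f
  · -- SRefl
    intro i a b hab
    rcases fin2_cases i with rfl | rfl
    · obtain ⟨p, q, rfl⟩ := ln_surj 0 a
      obtain ⟨r, s, rfl⟩ := ln_surj 0 b
      rw [mem_fr0] at hab
      obtain ⟨hac, hbd, habp, hcd⟩ := rect_sq.mp hab
      exact ⟨mem_fr0.mpr (rect_sq.mpr ⟨h0.1 p, h0.1 q, habp, habp⟩),
             mem_fr0.mpr (rect_sq.mpr ⟨h0.1 r, h0.1 s, hcd, hcd⟩)⟩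
    · obtain ⟨p, q, rfl⟩ := ln_surj 1 a
      obtain ⟨r, s, rfl⟩ := ln_surj 1 b
      rw [mem_fr1] at hab
      obtain ⟨hac, hbd, habp, hcd⟩ := rect_sq.mp hab
      exact ⟨mem_fr1.mpr (rect_sq.mpr ⟨hac, hac, h1.1 p, h1.1 q⟩),
             mem_fr1.mpr (rect_sq.mpr ⟨hbd, hbd, h1.1 r, h1.1 s⟩)⟩
  · -- SSymm
    intro i a b hab
    rcases fin2_cases i with rfl | rfl
    · obtain ⟨p, q, rfl⟩ := ln_surj 0 a
      obtain ⟨r, s, rfl⟩ := ln_surj 0 b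
      rw [mem_fr0] at hab
      obtain ⟨hac, hbd, habp, hcd⟩ := rect_sq.mp hab
      exact mem_fr0.mpr (rect_sq.mpr ⟨h0.2.1 _ _ hac, h0.2.1 _ _ hbd, hcd, habp⟩)
    · obtain ⟨p, q, rfl⟩ := ln_surj 1 a
      obtain ⟨r, s, rfl⟩ := ln_surj 1 b
      rw [mem_fr1] at hab
      obtain ⟨hac, hbd, habp, hcd⟩ := rect_sq.mp hab
      exact mem_fr1.mpr (rect_sq.mpr ⟨hbd, hac, h1.2.1 _ _ habp, h1.2.1 _ _ hcd⟩)
  · -- STrans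
    intro i a b c hab hbc
    rcases fin2_cases i with rfl | rfl
    · obtain ⟨p, q, rfl⟩ := ln_surj 0 a
      obtain ⟨r, s, rfl⟩ := ln_surj 0 b
      obtain ⟨t, u, rfl⟩ := ln_surj 0 c
      rw [mem_fr0] at hab hbc
      obtain ⟨hac, hbd, habp, hcd⟩ := rect_sq.mp hab
      obtain ⟨hac', hbd', habp', hcd'⟩ := rect_sq.mp hbc
      exact mem_fr0.mpr (rect_sq.mpr
        ⟨h0.2.2.1 _ _ _ hac hac', h0.2.2.1 _ _ _ hbd hbd', habp, hcd'⟩)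
    · obtain ⟨p, q, rfl⟩ := ln_surj 1 a
      obtain ⟨r, s, rfl⟩ := ln_surj 1 b
      obtain ⟨t, u, rfl⟩ := ln_surj 1 c
      rw [mem_fr1] at hab hbc
      obtain ⟨hac, hbd, habp, hcd⟩ := rect_sq.mp hab
      obtain ⟨hac', hbd', habp', hcd'⟩ := rect_sq.mp hbc
      exact mem_fr1.mpr (rect_sq.mpr
        ⟨hac, hbd', h1.2.2.1 _ _ _ habp habp', h1.2.2.1 _ _ _ hcd hcd'⟩)

lemma gen_sub_rect : (⋃ i : Fin 2, cubeSet i (![θ0, θ1] i)) ⊆ rectRel ![θ0, θ1] := by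
  intro γ hγ
  simp only [Set.mem_iUnion, cubeSet, Set.mem_image] at hγ
  obtain ⟨i, ⟨u, v⟩, huv, rfl⟩ := hγ
  rcases fin2_cases i with rfl | rfl
  · simp only [Matrix.cons_val_zero] at huv
    rw [cubeAt0]
    exact rect_sq.mpr ⟨huv, huv, h1.1 u, h1.1 v⟩
  · simp only [Matrix.cons_val_one, Matrix.head_cons] at huv
    rw [cubeAt1]
    exact rect_sq.mpr ⟨h0.1 u, h0.1 v, huv, huv⟩

lemma delta_sub_rect : DeltaRel σ ![θ0, θ1] ⊆ rectRel ![θ0, θ1] :=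
  Set.sInter_subset_of_mem ⟨rect_isHCong σ h0 h1, gen_sub_rect σ h0 h1⟩

end Rect
section Main

variable {A : Type u} (σ : Signature) [Alg σ A] (θ0 θ1 : Set (A × A))

def deltaStar : Set (A × A) := {p | sqCube p.1 p.1 p.1 p.2 ∈ DeltaRel σ ![θ0, θ1]}

lemma lastIdx2 : lastIdx 2 = (1 : Fin 2) := rfl

variable {σ θ0 θ1}

lemma genD0 {u v : A} (h : (u, v) ∈ θ0) : sqCube u u v v ∈ DeltaRel σ ![θ0, θ1] := by
  apply subset_congGen σ _
  rw [← cubeAt0]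
  exact Set.mem_iUnion.mpr ⟨0, Set.mem_image_of_mem _ (by simpa using h)⟩

lemma genD1 {u v : A} (h : (u, v) ∈ θ1) : sqCube u v u v ∈ DeltaRel σ ![θ0, θ1] := by
  apply subset_congGen σ _
  rw [← cubeAt1]
  exact Set.mem_iUnion.mpr ⟨1, Set.mem_image_of_mem _ (by simpa using h)⟩

variable (hc0 : IsCongruence σ θ0) (hc1 : IsCongruence σ θ1)
include hc0 hc1

lemma delta_theta {a b c d : A} (h : sqCube a b c d ∈ DeltaRel σ ![θ0, θ1]) :
    (a, c) ∈ θ0 ∧ (b, d) ∈ θ0 ∧ (a, b) ∈ θ1 ∧ (c, d) ∈ θ1 :=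
  rect_sq.mp (delta_sub_rect σ hc0 hc1 h)

lemma dkey {p q r s : A} (hγ : sqCube p q r s ∈ DeltaRel σ ![θ0, θ1])
    (h : sqCube p p p q ∈ DeltaRel σ ![θ0, θ1]) :
    sqCube r r r s ∈ DeltaRel σ ![θ0, θ1] := by
  have h3 : sqCube p p r s ∈ DeltaRel σ ![θ0, θ1] := ctrans0 h hγ
  have hpr : (p, r) ∈ θ0 := (delta_theta hc0 hc1 hγ).1
  exact ctrans0 (genD0 (hc0.2.1 _ _ hpr)) h3

lemma dstar_cong : IsCongruence σ (deltaStar σ θ0 θ1) := by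
  refine ⟨?_, ?_, ?_, ?_⟩
  · intro a
    exact genD1 (hc1.1 a)
  · intro a b h
    simp only [deltaStar, Set.mem_setOf_eq] at h ⊢
    have hab1 : (a, b) ∈ θ1 := (delta_theta hc0 hc1 h).2.2.2
    have hg : sqCube b a b a ∈ DeltaRel σ ![θ0, θ1] := genD1 (hc1.2.1 _ _ hab1)
    exact ctrans1 hg (csym0 h)
  · intro a b c h1 h2
    simp only [deltaStar, Set.mem_setOf_eq] at h1 h2 ⊢
    have hab0 : (a, b) ∈ θ0 := (delta_theta hc0 hc1 h1).2.1
    have h3 : sqCube a a b c ∈ DeltaRel σ ![θ0, θ1] := ctrans0 (genD0 hab0) h2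
    exact ctrans1 h1 h3
  · intro o xs ys hxy
    simp only [deltaStar, Set.mem_setOf_eq] at hxy ⊢
    have hc := congGen_compat σ _ o (fun k => sqCube (xs k) (xs k) (xs k) (ys k)) hxy
    have he : (fun f => Alg.interp (A := A) o fun k => sqCube (xs k) (xs k) (xs k) (ys k) f)
        = sqCube (Alg.interp (A := A) o xs) (Alg.interp (A := A) o xs)
            (Alg.interp (A := A) o xs) (Alg.interp (A := A) o ys) := by
      funext f; cases hf0 : f 0 <;> cases hf1 : f 1 <;> simp [sqCube, hf0, hf1]
    exact he ▸ hc

omit hc0 hc1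

def lineEquiv : ({x : Fin 2 // x ≠ 1} → Bool) ≃ Bool where
  toFun f := f (el 1)
  invFun b := fun _ => b
  left_inv f := (fun_eta f).symm
  right_inv _ := rfl

lemma card_lines (δ : Set (A × A)) (p q r s : A) :
    Nat.card {f : {x : Fin 2 // x ≠ 1} → Bool //
      (face 1 false (sqCube p q r s) f, face 1 true (sqCube p q r s) f) ∈ δ}
    = Nat.card {b : Bool // (cond b (r, s) (p, q)) ∈ δ} := by
  apply Nat.card_congr
  refine Equiv.subtypeEquiv lineEquiv fun f => ?_
  rw [face1f, face1t]
  show (ln 1 p r f, ln 1 q s f) ∈ δ ↔ _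
  cases h : f (el 1) <;> simp [ln, h, lineEquiv]

lemma bool_card_one {Q : Bool → Prop} (hf : Q false) (ht : ¬ Q true) :
    Nat.card {b // Q b} = 1 := by
  haveI : Unique {b // Q b} :=
    { default := ⟨false, hf⟩
      uniq := fun x => Subtype.ext (by
        cases hx : x.1
        · rfl
        · exact absurd (hx ▸ x.2) ht) }
  exact Nat.card_unique

lemma bool_card_ne_one {Q : Bool → Prop} (h : Q false ↔ Q true) :
    Nat.card {b // Q b} ≠ 1 := by
  by_cases hf : Q false
  · have hall : ∀ b, Q b := fun b => by cases b; exacts [hf, h.mp hf]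
    rw [Nat.card_congr (Equiv.subtypeUnivEquiv hall)]
    simp
  · haveI : IsEmpty {b // Q b} :=
      ⟨fun x => by cases hx : x.1; exacts [hf (hx ▸ x.2), hf (h.mpr (hx ▸ x.2))]⟩
    simp

include hc0 hc1

lemma dstar_cent : Centrality (deltaStar σ θ0 θ1) (1 : Fin 2) (DeltaRel σ ![θ0, θ1]) := by
  rintro ⟨γ, hγ, hcard⟩
  obtain ⟨p, q, r, s, rfl⟩ := sq_surj γ
  rw [card_lines] at hcard
  have h2 : (2 : ℕ) ^ (Fintype.card (Fin 2) - 1) - 1 = 1 := by simp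
  rw [h2] at hcard
  refine bool_card_ne_one ?_ hcard
  constructor
  · intro h
    exact dkey hc0 hc1 hγ h
  · intro h
    exact dkey hc0 hc1 (csym0 hγ) h

end Main
/-- relational characterization of the binary hypercommutator.
Vertices of `sqCube a b c d` are `a` at 00, `b` at 01, `c` at 10, `d` at 11 (pivot). -/
theorem stmt15 {A : Type u} (σ : Signature) [Alg σ A]
    (θ0 θ1 : Set (A × A)) (h0 : IsCongruence σ θ0) (h1 : IsCongruence σ θ1)
    (x y : A) :
    List.TFAE
      [ (x, y) ∈ hComm σ 2 ![θ0, θ1],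
        sqCube x x x y ∈ DeltaRel σ ![θ0, θ1],
        ∃ a : A, sqCube a a x y ∈ DeltaRel σ ![θ0, θ1],
        ∃ b : A, sqCube b x b y ∈ DeltaRel σ ![θ0, θ1] ] := by
  tfae_have 1 → 2 := by
    intro h
    exact Set.mem_sInter.mp h (deltaStar σ θ0 θ1)
      ⟨dstar_cong h0 h1, lastIdx2 ▸ dstar_cent h0 h1⟩
  tfae_have 2 → 3 := fun h => ⟨x, h⟩
  tfae_have 2 → 4 := fun h => ⟨x, h⟩
  tfae_have 4 → 2 := by
    rintro ⟨b, hb⟩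
    have hbx : (b, x) ∈ θ1 := (delta_theta h0 h1 hb).2.2.1
    have hg : sqCube x b x b ∈ DeltaRel σ ![θ0, θ1] := genD1 (h1.2.1 _ _ hbx)
    exact ctrans1 hg hb
  tfae_have 3 → 1 := by
    rintro ⟨a, ha⟩
    refine Set.mem_sInter.mpr fun δ hδ => ?_
    by_contra hxy
    have hcent := hδ.2
    rw [lastIdx2] at hcent
    refine hcent ⟨sqCube a a x y, ha, ?_⟩
    rw [card_lines]
    rw [bool_card_one (hδ.1.1 a) hxy]
    simp
  tfae_finish
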